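/- arXiv:1711.10277 — 2 statements merged into one kernel-verified Lean document; each statement's English description precedes it below -/
import Mathlib

section
/- For all k₁ > 0, k₂ > 0 and all vectors a, b ∈ ℝ³, one has 2k₂ ‖a‖²‖b‖² + 2(k₁ − k₂)(a·b)² ≥ 2 min(k₁, k₂) ‖a‖²‖b‖². Hence the fourth-order tensor Λ of the Oseen–Frank energy with k₂ = k₃ satisfies the strong Legendre–Hadamard (strong ellipticity) condition a⊗b : Λ : a⊗b ≥ η ‖a‖²‖b‖² with η = 2 min(k₁,k₂), for any value of α. -/
open scoped RealInnerProductSpace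

/-- For `k₁, k₂ > 0` and all `a, b ∈ ℝ³`,
`2k₂‖a‖²‖b‖² + 2(k₁ − k₂)(a·b)² ≥ 2 min(k₁,k₂)‖a‖²‖b‖²`, i.e. the
Oseen–Frank tensor with `k₂ = k₃` satisfies the strong Legendre–Hadamard
condition with ellipticity constant `η = 2 min(k₁,k₂)`. -/
theorem stmt_5 (k₁ k₂ : ℝ) (hk₁ : 0 < k₁) (hk₂ : 0 < k₂)
    (a b : EuclideanSpace ℝ (Fin 3)) :
    2 * k₂ * ‖a‖ ^ 2 * ‖b‖ ^ 2 + 2 * (k₁ - k₂) * ⟪a, b⟫ ^ 2 ≥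
      2 * min k₁ k₂ * ‖a‖ ^ 2 * ‖b‖ ^ 2 := by
  have h := abs_real_inner_le_norm a b
  have hcs : ⟪a, b⟫ ^ 2 ≤ ‖a‖ ^ 2 * ‖b‖ ^ 2 := by
    nlinarith [abs_nonneg ⟪a, b⟫, sq_abs ⟪a, b⟫, norm_nonneg a, norm_nonneg b]
  have hsq : 0 ≤ ⟪a, b⟫ ^ 2 := sq_nonneg _
  rcases le_total k₁ k₂ with hle | hle
  · rw [min_eq_left hle]; nlinarith
  · rw [min_eq_right hle]; nlinarith
end

section
/- Let μ₁, μ₂, μ₃, μ₄, μ₅, μ₆, λ, γ ∈ ℝ, let d, q ∈ ℝ³ and let V be a real 3×3 matrix. Define T := μ₁ (d · V_sym d)(d ⊗ d) + μ₄ V_sym + (μ₅ + μ₆ − λ(μ₂ + μ₃)) (d ⊗ V_sym d)_sym − γ(μ₂ + μ₃)(d ⊗ q)_sym − (d ⊗ q)_skw. Then T : V = μ₁ (d · V_sym d)² + μ₄ |V_sym|² + (μ₅ + μ₆ − λ(μ₂ + μ₃)) ‖V_sym d‖² − γ(μ₂ + μ₃) (q · V_sym d) + q · (V_skw d). -/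
open Matrix

/-- The symmetric part `(A + Aᵀ)/2` of a matrix. -/
noncomputable def symPart (A : Matrix (Fin 3) (Fin 3) ℝ) : Matrix (Fin 3) (Fin 3) ℝ :=
  ((1 : ℝ) / 2) • (A + Aᵀ)

/-- The skew-symmetric part `(A − Aᵀ)/2` of a matrix. -/
noncomputable def skwPart (A : Matrix (Fin 3) (Fin 3) ℝ) : Matrix (Fin 3) (Fin 3) ℝ :=
  ((1 : ℝ) / 2) • (A - Aᵀ)

/-- The Frobenius inner product `A : B = ∑ᵢⱼ Aᵢⱼ Bᵢⱼ`. -/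
def frob (A B : Matrix (Fin 3) (Fin 3) ℝ) : ℝ :=
  ∑ i, ∑ j, A i j * B i j

/-- The Euclidean dot product on `ℝ³`. -/
def dotR3 (a b : Fin 3 → ℝ) : ℝ := ∑ i, a i * b i

/-- Pointwise dissipation identity for the (reformulated) Leslie stress tensor:
with `T := μ₁ (d·V_sym d)(d⊗d) + μ₄ V_sym + (μ₅+μ₆−λ(μ₂+μ₃))(d⊗V_sym d)_sym
− γ(μ₂+μ₃)(d⊗q)_sym − (d⊗q)_skw` one has
`T : V = μ₁ (d·V_sym d)² + μ₄|V_sym|² + (μ₅+μ₆−λ(μ₂+μ₃))‖V_sym d‖²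
− γ(μ₂+μ₃)(q·V_sym d) + q·(V_skw d)`. -/
theorem stmt_9 (μ₁ μ₂ μ₃ μ₄ μ₅ μ₆ lam γ : ℝ) (d q : Fin 3 → ℝ)
    (V : Matrix (Fin 3) (Fin 3) ℝ)
    (T : Matrix (Fin 3) (Fin 3) ℝ)
    (hT : T = (μ₁ * dotR3 d (symPart V *ᵥ d)) • vecMulVec d d + μ₄ • symPart V
      + (μ₅ + μ₆ - lam * (μ₂ + μ₃)) • symPart (vecMulVec d (symPart V *ᵥ d))
      - (γ * (μ₂ + μ₃)) • symPart (vecMulVec d q) - skwPart (vecMulVec d q)) :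
    frob T V = μ₁ * (dotR3 d (symPart V *ᵥ d)) ^ 2 + μ₄ * frob (symPart V) (symPart V)
      + (μ₅ + μ₆ - lam * (μ₂ + μ₃)) * (∑ i, (symPart V *ᵥ d) i ^ 2)
      - γ * (μ₂ + μ₃) * dotR3 q (symPart V *ᵥ d)
      + dotR3 q (skwPart V *ᵥ d) := by
  subst hT
  simp only [frob, dotR3, symPart, skwPart, mulVec, dotProduct, vecMulVec,
    Matrix.add_apply, Matrix.sub_apply, Matrix.smul_apply, Matrix.transpose_apply,
    Matrix.of_apply, smul_eq_mul, Fin.sum_univ_three]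
  ring
end
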